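/- arXiv:0708.2177 — 6 statements merged into one kernel-verified Lean document; each statement's English description precedes it below -/
import Mathlib

section
/- Let (ψ_n), (φ_n) be sequences of nondecreasing functions on ℝ converging pointwise to nondecreasing continuous functions ψ and φ respectively. Then the pair (ψ_n, φ_n) converges to (ψ, φ) in the product topology on 𝓛 × 𝓛, where 𝓛 is the space of locally square-integrable functions with the topology of L² convergence on compact sets. -/
open Filter MeasureTheory

lemma aux_monotone_L2 (ψn : ℕ → ℝ → ℝ) (ψ : ℝ → ℝ)
    (hψn : ∀ n, Monotone (ψn n)) (hψ : Monotone ψ)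
    (hp : ∀ t : ℝ, Tendsto (fun n => ψn n t) atTop (nhds (ψ t)))
    (K : ℝ) (hK : 0 < K) :
    Tendsto (fun n => ∫ t in Set.Icc (-K) K, (ψn n t - ψ t) ^ 2) atTop (nhds 0) := by
  set C : ℝ := ψ K - ψ (-K) + 1 with hC
  have h0 : (0 : ℝ) = ∫ t in Set.Icc (-K) K, (0 : ℝ) := by simp
  rw [h0]
  apply tendsto_integral_filter_of_dominated_convergence (fun _ => C ^ 2)
  · filter_upwards with n
    exact (((hψn n).measurable.sub hψ.measurable).pow_const 2).aestronglyMeasurable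
  · have h1 : ∀ᶠ n in atTop, |ψn n (-K) - ψ (-K)| ≤ 1 := by
      have := (hp (-K)).sub_const (ψ (-K))
      rw [sub_self] at this
      have := this.abs
      rw [abs_zero] at this
      exact this.eventually_le_const one_pos
    have h2 : ∀ᶠ n in atTop, |ψn n K - ψ K| ≤ 1 := by
      have := (hp K).sub_const (ψ K)
      rw [sub_self] at this
      have := this.abs
      rw [abs_zero] at this
      exact this.eventually_le_const one_pos
    filter_upwards [h1, h2] with n hn1 hn2
    rw [ae_restrict_iff' measurableSet_Icc]
    filter_upwards with t ht
    have htm : -K ≤ t := ht.1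
    have htM : t ≤ K := ht.2
    have hub : ψn n t - ψ t ≤ C := by
      have : ψn n t ≤ ψn n K := hψn n htM
      have h2' : ψn n K ≤ ψ K + 1 := by linarith [abs_le.mp hn2]
      have : ψ (-K) ≤ ψ t := hψ htm
      simp only [hC]; linarith
    have hlb : -C ≤ ψn n t - ψ t := by
      have : ψn n (-K) ≤ ψn n t := hψn n htm
      have h1' : ψ (-K) - 1 ≤ ψn n (-K) := by linarith [abs_le.mp hn1]
      have : ψ t ≤ ψ K := hψ htM
      simp only [hC]; linarith
    have : (ψn n t - ψ t) ^ 2 ≤ C ^ 2 := sq_le_sq' hlb hub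
    calc ‖(ψn n t - ψ t) ^ 2‖ = (ψn n t - ψ t) ^ 2 := by
          rw [Real.norm_eq_abs, abs_of_nonneg (sq_nonneg _)]
      _ ≤ C ^ 2 := this
  · exact integrable_const _
  · filter_upwards with t
    have := ((hp t).sub_const (ψ t)).pow 2
    simpa using this

/-- Pairs of nondecreasing functions converging pointwise to nondecreasing continuous
limits converge in the product topology of L² convergence on compact sets. -/
theorem pair_monotone_pointwise_to_L2loc (ψn φn : ℕ → ℝ → ℝ) (ψ φ : ℝ → ℝ)
    (hψn : ∀ n, Monotone (ψn n)) (hφn : ∀ n, Monotone (φn n))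
    (hψ : Monotone ψ) (hφ : Monotone φ)
    (hψc : Continuous ψ) (hφc : Continuous φ)
    (hp1 : ∀ t : ℝ, Tendsto (fun n => ψn n t) atTop (nhds (ψ t)))
    (hp2 : ∀ t : ℝ, Tendsto (fun n => φn n t) atTop (nhds (φ t))) :
    ∀ K : ℝ, 0 < K →
      Tendsto (fun n => ∫ t in Set.Icc (-K) K, (ψn n t - ψ t) ^ 2) atTop (nhds 0) ∧
      Tendsto (fun n => ∫ t in Set.Icc (-K) K, (φn n t - φ t) ^ 2) atTop (nhds 0) := by
  intro K hK
  exact ⟨aux_monotone_L2 ψn ψ hψn hψ hp1 K hK, aux_monotone_L2 φn φ hφn hφ hp2 K hK⟩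
end

section
/- Let φ_1, …, φ_n : ℝ → ℝ be differentiable convex functions and Φ(u) = Σ_i φ_i(u_i). A point û with û₁ ≤ ⋯ ≤ û_n minimizes Φ over the cone {u₁ ≤ ⋯ ≤ u_n} if and only if the Fenchel conditions hold: for every i ∈ {1,…,n}, Σ_{j=i}^n φ_j'(û_j) ≥ 0, with equality for i = 1, and equality for every i such that û_{i−1} < û_i. -/
/-!
Since `Φ` is separable, convex and differentiable, `û` minimizes it over the convex isotone cone
exactly when `∑ φ_i'(û_i) (v_i - û_i) ≥ 0` for every isotone `v`: one direction is the tangent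
inequality of each `φ_i`, the other differentiates `Φ` along the segment from `û` to `v`.
Summation by parts turns this sum into `λ_1 d_1 + ∑_{i ≥ 2} λ_i (d_i - d_{i-1})`, where
`d = v - û` and `λ_i = ∑_{j ≥ i} φ_j'(û_j)`. Testing with the isotone vectors `û ± 1`,
`û + 1_{[i,n]}` and `û - (û_i - û_{i-1}) 1_{[i,n]}` yields the conditions; conversely they make
every term nonnegative, because `d_i - d_{i-1} = v_i - v_{i-1} ≥ 0` wherever `û_{i-1} = û_i`.
-/

open Finset

lemma ConvexOn.add_mul_sub_le_of_hasDerivAt {f : ℝ → ℝ} {S : Set ℝ} {x y f' : ℝ}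
    (hf : ConvexOn ℝ S f) (hx : x ∈ S) (hy : y ∈ S) (hd : HasDerivAt f f' x) :
    f x + f' * (y - x) ≤ f y := by
  rcases lt_trichotomy x y with hxy | rfl | hxy
  · have := hf.le_slope_of_hasDerivAt hx hy hxy hd
    rw [slope_def_field, le_div_iff₀ (sub_pos.2 hxy)] at this
    linarith
  · simp
  · have := hf.slope_le_of_hasDerivAt hy hx hxy hd
    rw [slope_def_field, div_le_iff₀ (sub_pos.2 hxy)] at this
    linarith

section Separable

variable {ι : Type*} {s : Finset ι} {φ : ι → ℝ → ℝ} {c u : ι → ℝ} {K : Set (ι → ℝ)}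

lemma hasDerivAt_sum_comp_add_mul (hderiv : ∀ i ∈ s, HasDerivAt (φ i) (c i) (u i))
    (d : ι → ℝ) :
    HasDerivAt (fun t : ℝ => ∑ i ∈ s, φ i (u i + t * d i)) (∑ i ∈ s, c i * d i) 0 := by
  refine HasDerivAt.fun_sum fun i hi => ?_
  have hline : HasDerivAt (fun t : ℝ => u i + t * d i) (d i) 0 := by
    simpa using ((hasDerivAt_id (0 : ℝ)).mul_const (d i)).const_add (u i)
  exact (hderiv i hi).comp_of_eq 0 hline (by simp)

lemma IsMinOn.sum_mul_sub_nonneg (hmin : IsMinOn (fun v => ∑ i ∈ s, φ i (v i)) K u)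
    (hK : StarConvex ℝ u K) (hderiv : ∀ i ∈ s, HasDerivAt (φ i) (c i) (u i))
    {v : ι → ℝ} (hv : v ∈ K) :
    0 ≤ ∑ i ∈ s, c i * (v i - u i) := by
  have hline : IsMinOn (fun t : ℝ => ∑ i ∈ s, φ i (u i + t * (v - u) i)) (Set.Icc 0 1) 0 :=
    isMinOn_iff.2 fun t ht => by
      simpa using isMinOn_iff.1 hmin _ (hK.add_smul_sub_mem hv ht.1 ht.2)
  have hsegment : segment ℝ (0 : ℝ) (0 + 1) ⊆ Set.Icc 0 1 := by simp [segment_eq_Icc]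
  simpa using hline.localize.hasFDerivWithinAt_nonneg
    (hasDerivAt_sum_comp_add_mul hderiv (v - u)).hasFDerivAt.hasFDerivWithinAt
    (mem_posTangentConeAt_of_segment_subset hsegment)

lemma isMinOn_of_sum_mul_sub_nonneg (hconv : ∀ i ∈ s, ConvexOn ℝ Set.univ (φ i))
    (hderiv : ∀ i ∈ s, HasDerivAt (φ i) (c i) (u i))
    (h : ∀ v ∈ K, 0 ≤ ∑ i ∈ s, c i * (v i - u i)) :
    IsMinOn (fun v => ∑ i ∈ s, φ i (v i)) K u := by
  refine isMinOn_iff.2 fun v hv => ?_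
  have htangent := sum_le_sum fun i hi =>
    (hconv i hi).add_mul_sub_le_of_hasDerivAt trivial trivial (hderiv i hi) (y := v i)
  rw [sum_add_distrib] at htangent
  linarith [h v hv]

theorem isMinOn_sum_iff (hK : StarConvex ℝ u K) (hconv : ∀ i ∈ s, ConvexOn ℝ Set.univ (φ i))
    (hderiv : ∀ i ∈ s, HasDerivAt (φ i) (c i) (u i)) :
    IsMinOn (fun v => ∑ i ∈ s, φ i (v i)) K u ↔ ∀ v ∈ K, 0 ≤ ∑ i ∈ s, c i * (v i - u i) :=
  ⟨fun hmin _ hv => hmin.sum_mul_sub_nonneg hK hderiv hv,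
    isMinOn_of_sum_mul_sub_nonneg hconv hderiv⟩

end Separable

def isotoneCone (n : ℕ) : Set (ℕ → ℝ) :=
  {u | ∀ i j, i ∈ Icc 1 n → j ∈ Icc 1 n → i ≤ j → u i ≤ u j}

lemma convex_isotoneCone (n : ℕ) : Convex ℝ (isotoneCone n) := by
  intro u hu v hv a b ha hb _ i j hi hj hij
  simp only [Pi.add_apply, Pi.smul_apply, smul_eq_mul]
  gcongr
  exacts [hu i j hi hj hij, hv i j hi hj hij]

lemma eq_add_sum_Icc_sub {d : ℕ → ℝ} {i : ℕ} (hi : 1 ≤ i) :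
    d i = d 1 + ∑ k ∈ Icc 2 i, (d k - d (k - 1)) := by
  induction i, hi using Nat.le_induction with
  | base => simp
  | succ i hi ih => rw [sum_Icc_succ_top (by omega), ← add_assoc, ← ih]; simp

lemma sum_Icc_mul_by_parts (c d : ℕ → ℝ) (n : ℕ) :
    ∑ i ∈ Icc 1 n, c i * d i =
      (∑ j ∈ Icc 1 n, c j) * d 1 + ∑ i ∈ Icc 2 n, (∑ j ∈ Icc i n, c j) * (d i - d (i - 1)) := by
  calc ∑ i ∈ Icc 1 n, c i * d i
      = ∑ i ∈ Icc 1 n, (c i * d 1 + ∑ k ∈ Icc 2 i, c i * (d k - d (k - 1))) := by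
        refine sum_congr rfl fun i hi => ?_
        rw [← mul_sum, ← mul_add, ← eq_add_sum_Icc_sub (mem_Icc.1 hi).1]
    _ = _ := by
        rw [sum_add_distrib, ← sum_mul, sum_comm' (t' := Icc 2 n) (s' := fun k => Icc k n)
          (by intro i k; simp only [mem_Icc]; omega)]
        simp only [sum_mul]

section IsotoneCone

variable {n : ℕ} {c u : ℕ → ℝ}

lemma add_indicator_mem_isotoneCone (hu : u ∈ isotoneCone n) {i : ℕ} {t : ℝ}
    (ht : ∀ a ∈ Icc 1 n, ∀ b ∈ Icc 1 n, a < i → i ≤ b → u a ≤ u b + t) :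
    (fun j => u j + if i ≤ j then t else 0) ∈ isotoneCone n := by
  intro a b ha hb hab
  by_cases hia : i ≤ a
  · simp [hia, hia.trans hab, hu a b ha hb hab]
  · by_cases hib : i ≤ b
    · simpa [hia, hib] using ht a ha b hb (by omega) hib
    · simpa [hia, hib] using hu a b ha hb hab

lemma sum_mul_indicator {i : ℕ} (hi : 1 ≤ i) (t : ℝ) :
    ∑ j ∈ Icc 1 n, c j * (if i ≤ j then t else 0) = t * ∑ j ∈ Icc i n, c j := by
  have hfilter : Icc i n = (Icc 1 n).filter (i ≤ ·) := by
    ext j; simp only [mem_Icc, mem_filter]; omega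
  rw [mul_sum, hfilter, sum_filter]
  exact sum_congr rfl fun j _ => by split_ifs <;> ring

lemma sum_mul_sub_nonneg_of_tail_sums (hu : u ∈ isotoneCone n) {v : ℕ → ℝ}
    (hv : v ∈ isotoneCone n) (htail : ∀ i ∈ Icc 1 n, 0 ≤ ∑ j ∈ Icc i n, c j)
    (htotal : ∑ j ∈ Icc 1 n, c j = 0)
    (hgap : ∀ i ∈ Icc 2 n, u (i - 1) < u i → ∑ j ∈ Icc i n, c j = 0) :
    0 ≤ ∑ i ∈ Icc 1 n, c i * (v i - u i) := by
  rw [sum_Icc_mul_by_parts, htotal, zero_mul, zero_add]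
  refine sum_nonneg fun i hi => ?_
  have hi' := mem_Icc.1 hi
  have hi₁ : i - 1 ∈ Icc 1 n := mem_Icc.2 ⟨by omega, by omega⟩
  have hi₂ : i ∈ Icc 1 n := mem_Icc.2 ⟨by omega, hi'.2⟩
  rcases (hu _ _ hi₁ hi₂ (by omega)).lt_or_eq with hlt | heq
  · simp [hgap i hi hlt]
  · have := hv _ _ hi₁ hi₂ (by omega)
    exact mul_nonneg (htail i hi₂) (by linarith)

lemma tail_sums_of_sum_mul_sub_nonneg (hu : u ∈ isotoneCone n)
    (h : ∀ v ∈ isotoneCone n, 0 ≤ ∑ i ∈ Icc 1 n, c i * (v i - u i)) :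
    (∀ i ∈ Icc 1 n, 0 ≤ ∑ j ∈ Icc i n, c j) ∧ (∑ j ∈ Icc 1 n, c j = 0) ∧
      (∀ i ∈ Icc 2 n, u (i - 1) < u i → ∑ j ∈ Icc i n, c j = 0) := by
  have hshift : ∀ i, 1 ≤ i → ∀ t : ℝ,
      (∀ a ∈ Icc 1 n, ∀ b ∈ Icc 1 n, a < i → i ≤ b → u a ≤ u b + t) →
        0 ≤ t * ∑ j ∈ Icc i n, c j := by
    intro i hi t ht
    have := h _ (add_indicator_mem_isotoneCone hu ht)
    simp only [add_sub_cancel_left] at this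
    rwa [sum_mul_indicator hi] at this
  have htail : ∀ i ∈ Icc 1 n, 0 ≤ ∑ j ∈ Icc i n, c j := fun i hi => by
    simpa using hshift i (mem_Icc.1 hi).1 1 fun a ha b hb hai hib => by
      linarith [hu a b ha hb (hai.le.trans hib)]
  refine ⟨htail, ?_, fun i hi hlt => ?_⟩
  · have hup := hshift 1 le_rfl 1 fun a ha _ _ hab => by simp at ha; omega
    have hdown := hshift 1 le_rfl (-1) fun a ha _ _ hab => by simp at ha; omega
    linarith
  · have hi' := mem_Icc.1 hi
    have hi₁ : i - 1 ∈ Icc 1 n := mem_Icc.2 ⟨by omega, by omega⟩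
    have hi₂ : i ∈ Icc 1 n := mem_Icc.2 ⟨by omega, hi'.2⟩
    have hdown := hshift i (by omega) (u (i - 1) - u i) fun a ha b hb hai hib => by
      linarith [hu a (i - 1) ha hi₁ (by omega), hu i b hi₂ hb hib]
    exact le_antisymm (nonpos_of_mul_nonneg_right hdown (by linarith)) (htail i hi₂)

theorem forall_sum_mul_sub_nonneg_iff (hu : u ∈ isotoneCone n) :
    (∀ v ∈ isotoneCone n, 0 ≤ ∑ i ∈ Icc 1 n, c i * (v i - u i)) ↔
      (∀ i ∈ Icc 1 n, 0 ≤ ∑ j ∈ Icc i n, c j) ∧ (∑ j ∈ Icc 1 n, c j = 0) ∧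
        (∀ i ∈ Icc 2 n, u (i - 1) < u i → ∑ j ∈ Icc i n, c j = 0) :=
  ⟨tail_sums_of_sum_mul_sub_nonneg hu, fun ⟨htail, htotal, hgap⟩ _ hv =>
    sum_mul_sub_nonneg_of_tail_sums hu hv htail htotal hgap⟩

end IsotoneCone

/-- Fenchel (Kuhn–Tucker) conditions characterizing the minimizer of a separable
differentiable convex function over the monotone cone (indices 1,…,n). -/
theorem fenchel_conditions_isotonic (n : ℕ) (φ φ' : ℕ → ℝ → ℝ)
    (hconv : ∀ i ∈ Finset.Icc 1 n, ConvexOn ℝ Set.univ (φ i))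
    (hderiv : ∀ i ∈ Finset.Icc 1 n, ∀ x : ℝ, HasDerivAt (φ i) (φ' i x) x)
    (uhat : ℕ → ℝ)
    (hmono : ∀ i j, i ∈ Finset.Icc 1 n → j ∈ Finset.Icc 1 n → i ≤ j → uhat i ≤ uhat j) :
    IsMinOn (fun u : ℕ → ℝ => ∑ i ∈ Finset.Icc 1 n, φ i (u i))
        {u : ℕ → ℝ | ∀ i j, i ∈ Finset.Icc 1 n → j ∈ Finset.Icc 1 n → i ≤ j → u i ≤ u j} uhat
      ↔ ((∀ i ∈ Finset.Icc 1 n, 0 ≤ ∑ j ∈ Finset.Icc i n, φ' j (uhat j)) ∧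
          (∑ j ∈ Finset.Icc 1 n, φ' j (uhat j) = 0) ∧
          (∀ i ∈ Finset.Icc 2 n, uhat (i - 1) < uhat i →
            ∑ j ∈ Finset.Icc i n, φ' j (uhat j) = 0)) := by
  have hK : StarConvex ℝ uhat (isotoneCone n) := convex_isotoneCone n hmono
  exact (isMinOn_sum_iff hK hconv fun i hi => hderiv i hi (uhat i)).trans
    (forall_sum_mul_sub_nonneg_iff hmono)
end

section
/- Let φ_1, …, φ_m be differentiable strictly convex functions and let ũ = (ũ₁,…,ũ_m) be the minimizer of Σ_{i=1}^m φ_i(u_i) over {u₁ ≤ ⋯ ≤ u_m}. Then for any θ₀ ∈ ℝ, the vector (ũ₁ ∧ θ₀, ũ₂ ∧ θ₀, …, ũ_m ∧ θ₀) minimizes Σ_{i=1}^m φ_i(u_i) over {u₁ ≤ ⋯ ≤ u_m ≤ θ₀}. -/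
/-!
If `ũ` minimizes `∑ φᵢ(uᵢ)` over the monotone cone and `u` is monotone with `u ≤ θ₀`, then
`w := u + (ũ - θ₀)⁺` is again monotone, so `∑ φᵢ(ũᵢ) ≤ ∑ φᵢ(wᵢ)`. Coordinatewise, the pair
`(ũᵢ ∧ θ₀, wᵢ)` has the same sum as `(uᵢ, ũᵢ)` and lies between its entries, so convexity gives
`φᵢ(ũᵢ ∧ θ₀) + φᵢ(wᵢ) ≤ φᵢ(uᵢ) + φᵢ(ũᵢ)`. Adding up the two inequalities yields
`∑ φᵢ(ũᵢ ∧ θ₀) ≤ ∑ φᵢ(uᵢ)`.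
-/

open Set

namespace ConvexOn

variable {s : Set ℝ} {f : ℝ → ℝ}

theorem map_add_map_le_of_add_eq (hf : ConvexOn ℝ s f) {a b x y : ℝ} (ha : a ∈ s) (hb : b ∈ s)
    (hax : a ≤ x) (hay : a ≤ y) (hsum : x + y = a + b) : f x + f y ≤ f a + f b := by
  rcases (show a ≤ b by linarith).eq_or_lt with rfl | hab
  · obtain rfl : x = a := by linarith
    obtain rfl : y = x := by linarith
    rfl
  -- `x` and `y` are the convex combinations of `a` and `b` with swapped weights.
  set μ := (x - a) / (b - a)
  have hμ₀ : 0 ≤ μ := div_nonneg (by linarith) (by linarith)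
  have hμ₁ : μ ≤ 1 := div_le_one_of_le₀ (by linarith) (by linarith)
  have hx : (1 - μ) • a + μ • b = x := by
    simp only [smul_eq_mul, μ]; field_simp; ring
  have hy : μ • a + (1 - μ) • b = y := by
    simp only [smul_eq_mul, μ]; rw [show y = a + b - x by linarith]; field_simp; ring
  have h₁ := hf.2 ha hb (sub_nonneg.2 hμ₁) hμ₀ (sub_add_cancel 1 μ)
  have h₂ := hf.2 ha hb hμ₀ (sub_nonneg.2 hμ₁) (add_sub_cancel μ 1)
  rw [hx] at h₁
  rw [hy] at h₂
  simp only [smul_eq_mul] at h₁ h₂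
  linarith

theorem map_min_add_map_add_posPart_le (hf : ConvexOn ℝ s f) {u v θ : ℝ} (hu : u ∈ s)
    (hv : v ∈ s) (huθ : u ≤ θ) : f (min v θ) + f (u + (v - θ)⁺) ≤ f u + f v := by
  rcases le_total v θ with hvθ | hθv
  · rw [min_eq_left hvθ, posPart_eq_zero.2 (sub_nonpos.2 hvθ), add_zero, add_comm]
  · rw [min_eq_right hθv, posPart_eq_self.2 (sub_nonneg.2 hθv)]
    exact hf.map_add_map_le_of_add_eq hu hv huθ (by linarith) (by ring)

end ConvexOn

theorem isMinOn_min_const_of_isMinOn_monotoneOn {ι : Type*} [Preorder ι] (t : Finset ι)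
    (φ : ι → ℝ → ℝ) (hφ : ∀ i ∈ t, ConvexOn ℝ univ (φ i)) (v : ι → ℝ)
    (hv : MonotoneOn v t) (hmin : IsMinOn (fun u ↦ ∑ i ∈ t, φ i (u i)) {u | MonotoneOn u t} v)
    (θ : ℝ) :
    IsMinOn (fun u ↦ ∑ i ∈ t, φ i (u i)) {u | MonotoneOn u t ∧ ∀ i ∈ t, u i ≤ θ}
      (fun i ↦ min (v i) θ) := by
  rintro u ⟨hu, huθ⟩
  have hw : MonotoneOn (fun i ↦ u i + (v i - θ)⁺) t :=
    hu.add fun i hi j hj hij ↦ posPart_mono (sub_le_sub_right (hv hi hj hij) θ)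
  have hvw : ∑ i ∈ t, φ i (v i) ≤ ∑ i ∈ t, φ i (u i + (v i - θ)⁺) := hmin hw
  have hpair : ∑ i ∈ t, (φ i (min (v i) θ) + φ i (u i + (v i - θ)⁺))
      ≤ ∑ i ∈ t, (φ i (u i) + φ i (v i)) :=
    Finset.sum_le_sum fun i hi ↦
      (hφ i hi).map_min_add_map_add_posPart_le (mem_univ _) (mem_univ _) (huθ i hi)
  simp only [Finset.sum_add_distrib] at hpair
  show ∑ i ∈ t, φ i (min (v i) θ) ≤ ∑ i ∈ t, φ i (u i)
  linarith

theorem truncated_isotonic_min_general (m : ℕ) (θ₀ : ℝ) (φ : ℕ → ℝ → ℝ)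
    (hconv : ∀ i ∈ Finset.Icc 1 m, StrictConvexOn ℝ Set.univ (φ i))
    (utilde : ℕ → ℝ)
    (hmono : ∀ i j, i ∈ Finset.Icc 1 m → j ∈ Finset.Icc 1 m → i ≤ j → utilde i ≤ utilde j)
    (hmin : IsMinOn (fun u : ℕ → ℝ => ∑ i ∈ Finset.Icc 1 m, φ i (u i))
        {u : ℕ → ℝ | ∀ i j, i ∈ Finset.Icc 1 m → j ∈ Finset.Icc 1 m → i ≤ j → u i ≤ u j}
        utilde) :
    IsMinOn (fun u : ℕ → ℝ => ∑ i ∈ Finset.Icc 1 m, φ i (u i))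
        {u : ℕ → ℝ | (∀ i j, i ∈ Finset.Icc 1 m → j ∈ Finset.Icc 1 m → i ≤ j → u i ≤ u j) ∧
          (∀ i ∈ Finset.Icc 1 m, u i ≤ θ₀)}
        (fun i => min (utilde i) θ₀) := by
  have hcone (u : ℕ → ℝ) : (∀ i j, i ∈ Finset.Icc 1 m → j ∈ Finset.Icc 1 m → i ≤ j → u i ≤ u j) ↔
      MonotoneOn u (Finset.Icc 1 m) :=
    ⟨fun h _ hi _ hj ↦ h _ _ hi hj, fun h _ _ hi hj ↦ h hi hj⟩
  simp only [hcone] at hmono hmin ⊢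
  exact isMinOn_min_const_of_isMinOn_monotoneOn _ φ (fun i hi ↦ (hconv i hi).convexOn) utilde
    hmono hmin θ₀

/-- Truncation characterization: if ũ minimizes the separable strictly convex objective
over the monotone cone, then min(ũ, θ₀) (coordinatewise) minimizes it over the cone with
the additional upper bound θ₀. -/
theorem truncated_isotonic_min (m : ℕ) (θ₀ : ℝ) (φ φ' : ℕ → ℝ → ℝ)
    (hconv : ∀ i ∈ Finset.Icc 1 m, StrictConvexOn ℝ Set.univ (φ i))
    (hderiv : ∀ i ∈ Finset.Icc 1 m, ∀ x : ℝ, HasDerivAt (φ i) (φ' i x) x)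
    (utilde : ℕ → ℝ)
    (hmono : ∀ i j, i ∈ Finset.Icc 1 m → j ∈ Finset.Icc 1 m → i ≤ j → utilde i ≤ utilde j)
    (hmin : IsMinOn (fun u : ℕ → ℝ => ∑ i ∈ Finset.Icc 1 m, φ i (u i))
        {u : ℕ → ℝ | ∀ i j, i ∈ Finset.Icc 1 m → j ∈ Finset.Icc 1 m → i ≤ j → u i ≤ u j}
        utilde) :
    IsMinOn (fun u : ℕ → ℝ => ∑ i ∈ Finset.Icc 1 m, φ i (u i))
        {u : ℕ → ℝ | (∀ i j, i ∈ Finset.Icc 1 m → j ∈ Finset.Icc 1 m → i ≤ j → u i ≤ u j) ∧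
          (∀ i ∈ Finset.Icc 1 m, u i ≤ θ₀)}
        (fun i => min (utilde i) θ₀) :=
  truncated_isotonic_min_general m θ₀ φ hconv utilde hmono hmin
end

section
/- Let û minimize Φ(u) = Σ_i φ_i(u_i) over the monotone cone {u₁ ≤ ⋯ ≤ u_n}, where each φ_i is twice differentiable and strictly convex with φ_i'' > 0. Define d_i = φ_i''(û_i) > 0 and g(i) = û_i − φ_i'(û_i)/d_i, and let ξ(u) = Σ_{i=1}^n (u_i − g(i))² d_i. Then û also minimizes ξ over {u₁ ≤ ⋯ ≤ u_n}; i.e., û is the weighted isotonic regression of g with weights (d_i). -/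
/-!
At the constrained minimiser û of Φ on the convex isotonic cone, the one-sided derivative of Φ
towards any isotonic v is nonnegative: ∑ φᵢ'(ûᵢ)(vᵢ − ûᵢ) ≥ 0. Since ξ is quadratic with
∇ξ(û) = 2∇Φ(û), expanding around û gives
ξ(v) − ξ(û) = ∑ dᵢ(vᵢ − ûᵢ)² + 2 ∑ φᵢ'(ûᵢ)(vᵢ − ûᵢ) ≥ 0.
-/

open Finset

theorem IsMinOn.hasLineDerivAt_nonneg {E : Type*} [AddCommGroup E] [Module ℝ E] {f : E → ℝ}
    {s : Set E} {x y : E} {L : ℝ} (hs : Convex ℝ s) (hmin : IsMinOn f s x) (hx : x ∈ s)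
    (hy : y ∈ s) (hf : HasLineDerivAt ℝ f L x (y - x)) : 0 ≤ L := by
  have hminIcc : IsMinOn (fun t : ℝ => f (x + t • (y - x))) (Set.Icc 0 1) 0 := fun t ht => by
    simpa using hmin (hs.add_smul_sub_mem hx hy ht)
  have hcone : (1 : ℝ) ∈ posTangentConeAt (Set.Icc (0 : ℝ) 1) 0 :=
    mem_posTangentConeAt_of_segment_subset (by simp [segment_eq_Icc])
  simpa using hminIcc.localize.hasFDerivWithinAt_nonneg hf.hasFDerivAt.hasFDerivWithinAt hcone

theorem hasLineDerivAt_sum_comp_apply {ι : Type*} (S : Finset ι) {φ φ' : ι → ℝ → ℝ}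
    {x v : ι → ℝ} (hφ : ∀ i ∈ S, HasDerivAt (φ i) (φ' i (x i)) (x i)) :
    HasLineDerivAt ℝ (fun u : ι → ℝ => ∑ i ∈ S, φ i (u i)) (∑ i ∈ S, φ' i (x i) * v i) x v := by
  refine HasDerivAt.fun_sum fun i hi => ?_
  have hline : HasDerivAt (fun t : ℝ => x i + t * v i) (v i) 0 := by
    simpa using ((hasDerivAt_id (0 : ℝ)).mul_const (v i)).const_add (x i)
  simpa [Function.comp_def] using (hφ i hi).comp_of_eq 0 hline (by simp)

theorem convex_setOf_le_of_le {ι : Type*} [LE ι] (S : Set ι) :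
    Convex ℝ {u : ι → ℝ | ∀ i j, i ∈ S → j ∈ S → i ≤ j → u i ≤ u j} := by
  intro u hu v hv a b ha hb _ i j hi hj hij
  simp only [Pi.add_apply, Pi.smul_apply, smul_eq_mul]
  gcongr
  exacts [hu i j hi hj hij, hv i j hi hj hij]

theorem sum_sq_sub_newton_mul_le {ι : Type*} (S : Finset ι) {u v p d : ι → ℝ}
    (hd : ∀ i ∈ S, 0 < d i) (hp : 0 ≤ ∑ i ∈ S, p i * (v i - u i)) :
    ∑ i ∈ S, (u i - (u i - p i / d i)) ^ 2 * d i ≤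
      ∑ i ∈ S, (v i - (u i - p i / d i)) ^ 2 * d i := by
  have hexpand : ∀ i ∈ S, (v i - (u i - p i / d i)) ^ 2 * d i =
      (u i - (u i - p i / d i)) ^ 2 * d i + ((v i - u i) ^ 2 * d i + 2 * (p i * (v i - u i))) := by
    intro i hi
    field_simp [(hd i hi).ne']
    ring
  have hquad : 0 ≤ ∑ i ∈ S, (v i - u i) ^ 2 * d i :=
    sum_nonneg fun i hi => mul_nonneg (sq_nonneg _) (hd i hi).le
  rw [sum_congr rfl hexpand, sum_add_distrib, sum_add_distrib, ← mul_sum]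
  linarith

theorem self_induced_characterization_general (n : ℕ) (φ φ' φ'' : ℕ → ℝ → ℝ)
    (hderiv : ∀ i ∈ Finset.Icc 1 n, ∀ x : ℝ, HasDerivAt (φ i) (φ' i x) x)
    (hpos : ∀ i ∈ Finset.Icc 1 n, ∀ x : ℝ, 0 < φ'' i x)
    (uhat : ℕ → ℝ)
    (hmono : ∀ i j, i ∈ Finset.Icc 1 n → j ∈ Finset.Icc 1 n → i ≤ j → uhat i ≤ uhat j)
    (hmin : IsMinOn (fun u : ℕ → ℝ => ∑ i ∈ Finset.Icc 1 n, φ i (u i))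
        {u : ℕ → ℝ | ∀ i j, i ∈ Finset.Icc 1 n → j ∈ Finset.Icc 1 n → i ≤ j → u i ≤ u j}
        uhat) :
    IsMinOn (fun u : ℕ → ℝ => ∑ i ∈ Finset.Icc 1 n,
        (u i - (uhat i - φ' i (uhat i) / φ'' i (uhat i))) ^ 2 * φ'' i (uhat i))
        {u : ℕ → ℝ | ∀ i j, i ∈ Finset.Icc 1 n → j ∈ Finset.Icc 1 n → i ≤ j → u i ≤ u j}
        uhat := by
  intro v hv
  have hfirstOrder : 0 ≤ ∑ i ∈ Icc 1 n, φ' i (uhat i) * (v i - uhat i) :=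
    hmin.hasLineDerivAt_nonneg (convex_setOf_le_of_le _) hmono hv
      (hasLineDerivAt_sum_comp_apply _ fun i hi => hderiv i hi (uhat i))
  exact sum_sq_sub_newton_mul_le _ (fun i hi => hpos i hi (uhat i)) hfirstOrder

/-- Self-induced characterization: the isotonic minimizer of a separable smooth strictly
convex objective is also the weighted isotonic regression of
g(i) = uhat i − φᵢ'(uhat i)/φᵢ''(uhat i) with weights dᵢ = φᵢ''(uhat i). -/
theorem self_induced_characterization (n : ℕ) (φ φ' φ'' : ℕ → ℝ → ℝ)
    (hconv : ∀ i ∈ Finset.Icc 1 n, StrictConvexOn ℝ Set.univ (φ i))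
    (hderiv : ∀ i ∈ Finset.Icc 1 n, ∀ x : ℝ, HasDerivAt (φ i) (φ' i x) x)
    (hderiv2 : ∀ i ∈ Finset.Icc 1 n, ∀ x : ℝ, HasDerivAt (φ' i) (φ'' i x) x)
    (hpos : ∀ i ∈ Finset.Icc 1 n, ∀ x : ℝ, 0 < φ'' i x)
    (uhat : ℕ → ℝ)
    (hmono : ∀ i j, i ∈ Finset.Icc 1 n → j ∈ Finset.Icc 1 n → i ≤ j → uhat i ≤ uhat j)
    (hmin : IsMinOn (fun u : ℕ → ℝ => ∑ i ∈ Finset.Icc 1 n, φ i (u i))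
        {u : ℕ → ℝ | ∀ i j, i ∈ Finset.Icc 1 n → j ∈ Finset.Icc 1 n → i ≤ j → u i ≤ u j}
        uhat) :
    IsMinOn (fun u : ℕ → ℝ => ∑ i ∈ Finset.Icc 1 n,
        (u i - (uhat i - φ' i (uhat i) / φ'' i (uhat i))) ^ 2 * φ'' i (uhat i))
        {u : ℕ → ℝ | ∀ i j, i ∈ Finset.Icc 1 n → j ∈ Finset.Icc 1 n → i ≤ j → u i ≤ u j}
        uhat :=
  self_induced_characterization_general n φ φ' φ'' hderiv hpos uhat hmono hmin
end

section
/- Let ψ : ℝ → ℝ be differentiable at z₀ with derivative ψ'(z₀), let I and p be functions that are continuous and positive at z₀ (with values I(ψ(z₀)) and p(z₀) respectively after composition/evaluation as appropriate). Define ξ_n(h) = ∫_0^h [n^{1/3}(ψ(z₀ + u n^{−1/3}) − ψ(z₀))] · I(ψ(z₀ + u n^{−1/3})) · p(z₀ + u n^{−1/3}) du for h ≥ 0. Then ξ_n(h) → (ψ'(z₀)/2) · I(ψ(z₀)) · p(z₀) · h² uniformly over h ∈ [0, K], for every K > 0. -/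
/-!
Write `t = n^{-1/3}`, so that the integrand is `t⁻¹ (ψ(z₀ + ut) - ψ(z₀)) J(z₀ + ut) p(z₀ + ut)`.
As `t → 0` (`t ≠ 0`) the difference quotient tends to `ψ'(z₀) u` and the other two factors to
`J(z₀)` and `p(z₀)`, uniformly for `u` in the compact interval `[0, K]`. Products of uniformly
convergent families with continuous limits converge uniformly on compact sets, and uniform
convergence of the integrands on `[0, K]` gives uniform convergence of `∫₀ʰ` over `h ∈ [0, K]`,
here towards `∫₀ʰ ψ'(z₀) J(z₀) p(z₀) u du = ψ'(z₀)/2 · J(z₀) p(z₀) h²`.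
-/

open MeasureTheory Filter Topology Set Bornology

section Rescaling

variable {s : Set ℝ} {x : ℝ}

theorem tendsto_add_mul_prod_principal_of_isBounded (hs : IsBounded s) :
    Tendsto (fun q : ℝ × ℝ => x + q.2 * q.1) (𝓝 0 ×ˢ 𝓟 s) (𝓝 x) := by
  obtain ⟨C, hC⟩ := hs.exists_norm_le
  have hbdd : IsBoundedUnder (· ≤ ·) (𝓝 (0 : ℝ) ×ˢ 𝓟 s) ((‖·‖) ∘ Prod.snd) :=
    ⟨C, eventually_map.2 <| eventually_prod_principal_iff.2 <| .of_forall fun _ u hu => hC u hu⟩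
  simpa only [mul_comm, add_zero] using (tendsto_fst.zero_mul_isBoundedUnder_le hbdd).const_add x

theorem ContinuousAt.tendstoUniformlyOn_comp_add_mul {E : Type*} [PseudoMetricSpace E]
    {g : ℝ → E} (hg : ContinuousAt g x) (hs : IsBounded s) :
    TendstoUniformlyOn (fun t u => g (x + u * t)) (fun _ => g x) (𝓝 0) s := by
  refine Metric.tendstoUniformlyOn_iff.2 fun ε hε => ?_
  have hnear : ∀ᶠ y in 𝓝 x, dist (g x) (g y) < ε := by
    simpa only [dist_comm] using hg.eventually (Metric.ball_mem_nhds _ hε)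
  exact eventually_prod_principal_iff.1 (tendsto_add_mul_prod_principal_of_isBounded hs hnear)

theorem HasDerivAt.tendstoUniformlyOn_slope_comp_add_mul {f : ℝ → ℝ} {f' : ℝ}
    (hf : HasDerivAt f f' x) (hs : IsBounded s) :
    TendstoUniformlyOn (fun t u => t⁻¹ * (f (x + u * t) - f x)) (fun u => f' * u) (𝓝[≠] 0) s := by
  refine Metric.tendstoUniformlyOn_iff.2 fun ε hε => ?_
  obtain ⟨C, hC0, hC⟩ := hs.exists_pos_norm_le
  have hnear : ∀ᶠ y in 𝓝 x, ‖f y - f x - (y - x) • f'‖ ≤ ε / (C + 1) * ‖y - x‖ :=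
    (hasDerivAt_iff_isLittleO.1 hf).def (by positivity)
  have hunif :=
    eventually_prod_principal_iff.1 (tendsto_add_mul_prod_principal_of_isBounded hs hnear)
  filter_upwards [nhdsWithin_le_nhds hunif, self_mem_nhdsWithin] with t ht (ht0 : t ≠ 0) u hu
  have hrem := ht u hu
  simp only [add_sub_cancel_left, smul_eq_mul, Real.norm_eq_abs] at hrem
  have hu' : |u| ≤ C := hC u hu
  have key : f' * u - t⁻¹ * (f (x + u * t) - f x) =
      -t⁻¹ * (f (x + u * t) - f x - u * t * f') := by
    field_simp
    ring
  calc dist (f' * u) (t⁻¹ * (f (x + u * t) - f x))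
      = |t|⁻¹ * |f (x + u * t) - f x - u * t * f'| := by
        rw [Real.dist_eq, key, abs_mul, abs_neg, abs_inv]
    _ ≤ |t|⁻¹ * (ε / (C + 1) * |u * t|) := by gcongr
    _ = ε / (C + 1) * |u| := by
        rw [abs_mul]
        field_simp
    _ ≤ ε / (C + 1) * C := by gcongr
    _ < ε := by
        rw [div_mul_eq_mul_div, div_lt_iff₀ (by positivity)]
        nlinarith

end Rescaling

theorem TendstoUniformlyOn.comp_tendsto {α β ι κ : Type*} [UniformSpace β] {F : ι → α → β}
    {f : α → β} {l : Filter ι} {s : Set α} {q : Filter κ} {τ : κ → ι}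
    (h : TendstoUniformlyOn F f l s) (hτ : Tendsto τ q l) :
    TendstoUniformlyOn (fun k => F (τ k)) f q s :=
  fun v hv => hτ (h v hv)

theorem TendstoUniformlyOn.mul_of_isCompact {X M ι : Type*} [TopologicalSpace X]
    [PseudoMetricSpace M] [Zero M] [Mul M] [IsBoundedSMul M M]
    {s : Set X} {F G : ι → X → M} {f g : X → M} {l : Filter ι}
    (hs : IsCompact s) (hF : TendstoUniformlyOn F f l s) (hG : TendstoUniformlyOn G g l s)
    (hf : ContinuousOn f s) (hg : ContinuousOn g s) :
    TendstoUniformlyOn (fun n x => F n x * G n x) (fun x => f x * g x) l s := by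
  have bdd : ∀ {h : X → M}, ContinuousOn h s →
      ∀ x ∈ s, (𝓝[s] x).IsBoundedUnder (· ≤ ·) (fun y ↦ dist (h y) 0) := fun hh x hx =>
    ((hh x hx).dist tendsto_const_nhds).isBoundedUnder_le
  rw [← tendstoLocallyUniformlyOn_iff_tendstoUniformlyOn_of_compact hs] at *
  exact hF.mul₀_of_isBoundedUnder hG (bdd hf) (bdd hg)

theorem TendstoUniformlyOn.tendstoUniformlyOn_setIntegral_Icc {ι E : Type*}
    [NormedAddCommGroup E] [NormedSpace ℝ E] {μ : Measure ℝ} [IsLocallyFiniteMeasure μ]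
    {F : ι → ℝ → E} {f : ℝ → E} {l : Filter ι} {a b : ℝ}
    (hF : TendstoUniformlyOn F f l (Icc a b))
    (hFm : ∀ᶠ n in l, AEStronglyMeasurable (F n) (μ.restrict (Icc a b)))
    (hf : IntegrableOn f (Icc a b) μ) :
    TendstoUniformlyOn (fun n h => ∫ u in Icc a h, F n u ∂μ) (fun h => ∫ u in Icc a h, f u ∂μ) l
      (Icc a b) := by
  refine Metric.tendstoUniformlyOn_iff.2 fun ε hε => ?_
  set δ := ε / (μ.real (Icc a b) + 1)
  filter_upwards [Metric.tendstoUniformlyOn_iff.1 hF δ (by positivity), hFm] with n hn hnm h hh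
  have hsub : Icc a h ⊆ Icc a b := Icc_subset_Icc_right hh.2
  have hdiff : ∀ u ∈ Icc a b, ‖f u - F n u‖ ≤ δ := fun u hu => by
    simpa only [dist_eq_norm] using (hn u hu).le
  have hFn : IntegrableOn (F n) (Icc a b) μ := by
    have : IntegrableOn (fun u => f u - F n u) (Icc a b) μ :=
      .of_bound measure_Icc_lt_top (hf.1.sub hnm) δ
        ((ae_restrict_iff' measurableSet_Icc).2 (.of_forall hdiff))
    exact (hf.sub this).congr_fun (fun u _ => sub_sub_cancel _ _) measurableSet_Icc
  rw [dist_eq_norm, ← integral_sub (hf.mono_set hsub) (hFn.mono_set hsub)]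
  calc ‖∫ u in Icc a h, f u - F n u ∂μ‖ ≤ δ * μ.real (Icc a h) :=
        norm_setIntegral_le_of_norm_le_const measure_Icc_lt_top fun u hu => hdiff u (hsub hu)
    _ ≤ δ * μ.real (Icc a b) := by gcongr; exact measure_Icc_lt_top.ne
    _ < ε := by
        rw [div_mul_eq_mul_div, div_lt_iff₀ (by positivity)]
        nlinarith

theorem tendsto_natCast_rpow_neg_nhdsNE_zero {y : ℝ} (hy : 0 < y) :
    Tendsto (fun n : ℕ => (n : ℝ) ^ (-y)) atTop (𝓝[≠] 0) := by
  refine tendsto_nhdsWithin_iff.2 ⟨(tendsto_rpow_neg_atTop hy).comp tendsto_natCast_atTop_atTop, ?_⟩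
  filter_upwards [eventually_gt_atTop 0] with n hn
  exact (Real.rpow_pos_of_pos (Nat.cast_pos.2 hn) _).ne'

theorem setIntegral_Icc_zero_mul_const {c h : ℝ} (hh : 0 ≤ h) :
    ∫ u in Icc 0 h, c * u = c / 2 * h ^ 2 := by
  rw [integral_Icc_eq_integral_Ioc, ← intervalIntegral.integral_of_le hh,
    intervalIntegral.integral_const_mul, integral_id]
  ring

section Drift

variable {ψ J p : ℝ → ℝ} {z₀ c : ℝ}

theorem tendstoUniformlyOn_drift_integrand (hψ : HasDerivAt ψ c z₀) (hJ : ContinuousAt J z₀)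
    (hp : ContinuousAt p z₀) {s : Set ℝ} (hs : IsCompact s) :
    TendstoUniformlyOn
      (fun t u => t⁻¹ * (ψ (z₀ + u * t) - ψ z₀) * J (z₀ + u * t) * p (z₀ + u * t))
      (fun u => c * u * J z₀ * p z₀) (𝓝[≠] 0) s := by
  have hslope := hψ.tendstoUniformlyOn_slope_comp_add_mul hs.isBounded
  have hne : Tendsto id (𝓝[≠] (0 : ℝ)) (𝓝 0) := tendsto_id.mono_left nhdsWithin_le_nhds
  have hJ' := (hJ.tendstoUniformlyOn_comp_add_mul hs.isBounded).comp_tendsto hne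
  have hp' := (hp.tendstoUniformlyOn_comp_add_mul hs.isBounded).comp_tendsto hne
  exact (hslope.mul_of_isCompact hs hJ' (by fun_prop) continuousOn_const).mul_of_isCompact hs hp'
    (by fun_prop) continuousOn_const

theorem tendstoUniformlyOn_drift_integral {ι : Type*} {l : Filter ι} {τ : ι → ℝ}
    (hτ : Tendsto τ l (𝓝[≠] 0)) (hψm : Measurable ψ) (hJm : Measurable J) (hpm : Measurable p)
    (hψ : HasDerivAt ψ c z₀) (hJ : ContinuousAt J z₀) (hp : ContinuousAt p z₀) (K : ℝ) :
    TendstoUniformlyOn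
      (fun i h => ∫ u in Icc 0 h, (τ i)⁻¹ * (ψ (z₀ + u * τ i) - ψ z₀) * J (z₀ + u * τ i) *
        p (z₀ + u * τ i))
      (fun h => c / 2 * J z₀ * p z₀ * h ^ 2) l (Icc 0 K) := by
  have hunif : TendstoUniformlyOn
      (fun i u => (τ i)⁻¹ * (ψ (z₀ + u * τ i) - ψ z₀) * J (z₀ + u * τ i) * p (z₀ + u * τ i))
      (fun u => c * u * J z₀ * p z₀) l (Icc 0 K) :=
    (tendstoUniformlyOn_drift_integrand hψ hJ hp isCompact_Icc).comp_tendsto hτ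
  have hmeas : ∀ᶠ i in l, AEStronglyMeasurable (fun u => (τ i)⁻¹ * (ψ (z₀ + u * τ i) - ψ z₀) *
      J (z₀ + u * τ i) * p (z₀ + u * τ i)) (volume.restrict (Icc 0 K)) :=
    .of_forall fun i => by fun_prop
  have hlim : IntegrableOn (fun u => c * u * J z₀ * p z₀) (Icc 0 K) :=
    (by fun_prop : Continuous fun u => c * u * J z₀ * p z₀).integrableOn_Icc
  refine (hunif.tendstoUniformlyOn_setIntegral_Icc hmeas hlim).congr_right fun h hh => ?_
  have hcomm : ∀ u, c * u * J z₀ * p z₀ = c * J z₀ * p z₀ * u := fun u => by ring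
  simp only [hcomm, setIntegral_Icc_zero_mul_const hh.1]
  ring

end Drift

theorem drift_uniform_convergence_general (ψ J p : ℝ → ℝ) (z₀ ψ'z₀ : ℝ)
    (hψm : Measurable ψ) (hJm : Measurable J) (hpm : Measurable p)
    (hψ : HasDerivAt ψ ψ'z₀ z₀)
    (hJ : ContinuousAt J z₀)
    (hp : ContinuousAt p z₀) :
    ∀ K : ℝ, 0 < K → ∀ ε : ℝ, 0 < ε → ∃ N : ℕ, ∀ n : ℕ, N ≤ n →
      ∀ h ∈ Set.Icc (0 : ℝ) K,
        |(∫ u in Set.Icc (0 : ℝ) h,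
            ((n : ℝ) ^ ((1 : ℝ) / 3) * (ψ (z₀ + u * (n : ℝ) ^ (-(1 : ℝ) / 3)) - ψ z₀)) *
              J (z₀ + u * (n : ℝ) ^ (-(1 : ℝ) / 3)) *
              p (z₀ + u * (n : ℝ) ^ (-(1 : ℝ) / 3)))
          - ψ'z₀ / 2 * J z₀ * p z₀ * h ^ 2| < ε := by
  intro K _ ε hε
  have hτ : Tendsto (fun n : ℕ => (n : ℝ) ^ (-(1 : ℝ) / 3)) atTop (𝓝[≠] 0) := by
    simpa only [neg_div] using tendsto_natCast_rpow_neg_nhdsNE_zero (y := 1 / 3) (by norm_num)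
  have hconv := tendstoUniformlyOn_drift_integral hτ hψm hJm hpm hψ hJ hp K
  obtain ⟨N, hN⟩ := eventually_atTop.1 (Metric.tendstoUniformlyOn_iff.1 hconv ε hε)
  refine ⟨N, fun n hn h hh => ?_⟩
  have hroot : (n : ℝ) ^ ((1 : ℝ) / 3) = ((n : ℝ) ^ (-(1 : ℝ) / 3))⁻¹ := by
    rw [neg_div, Real.rpow_neg n.cast_nonneg, inv_inv]
  rw [hroot, abs_sub_comm, ← Real.dist_eq]
  exact hN n hn h hh

/-- Drift computation in Lemma 2.2: the rescaled drift integral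
ξₙ(h) = ∫₀ʰ n^{1/3}(ψ(z₀+un^{−1/3}) − ψ(z₀)) I(ψ(z₀+un^{−1/3})) p(z₀+un^{−1/3}) du
converges to (ψ'(z₀)/2) I(ψ(z₀)) p(z₀) h² uniformly over h ∈ [0,K], for every K > 0.
Here J = I ∘ ψ. -/
theorem drift_uniform_convergence (ψ J p : ℝ → ℝ) (z₀ ψ'z₀ : ℝ)
    (hψm : Measurable ψ) (hJm : Measurable J) (hpm : Measurable p)
    (hψ : HasDerivAt ψ ψ'z₀ z₀)
    (hJ : ContinuousAt J z₀) (hJpos : 0 < J z₀)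
    (hp : ContinuousAt p z₀) (hppos : 0 < p z₀) :
    ∀ K : ℝ, 0 < K → ∀ ε : ℝ, 0 < ε → ∃ N : ℕ, ∀ n : ℕ, N ≤ n →
      ∀ h ∈ Set.Icc (0 : ℝ) K,
        |(∫ u in Set.Icc (0 : ℝ) h,
            ((n : ℝ) ^ ((1 : ℝ) / 3) * (ψ (z₀ + u * (n : ℝ) ^ (-(1 : ℝ) / 3)) - ψ z₀)) *
              J (z₀ + u * (n : ℝ) ^ (-(1 : ℝ) / 3)) *
              p (z₀ + u * (n : ℝ) ^ (-(1 : ℝ) / 3)))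
          - ψ'z₀ / 2 * J z₀ * p z₀ * h ^ 2| < ε :=
  drift_uniform_convergence_general ψ J p z₀ ψ'z₀ hψm hJm hpm hψ hJ hp
end

section
/- Let d₁, …, d_n > 0 and g : {1,…,n} → ℝ, and let û = (û₁,…,û_n) with û₁ ≤ ⋯ ≤ û_n be the minimizer of ξ(u) = Σ_{i=1}^n (u_i − g(i))² d_i over {u₁ ≤ ⋯ ≤ u_n}. Then û is given by the left-hand slopes of the greatest convex minorant of the cumulative sum diagram: û_i equals the left derivative, evaluated at Σ_{j≤i} d_j, of the greatest convex minorant of the piecewise-linear function through the points (Σ_{j≤i} d_j, Σ_{j≤i} g(j) d_j) for i = 0,1,…,n (with the point (0,0) at i=0). -/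
/-!
Perturbing the minimizer `û` by `ε` on the indices `j ≤ k` changes the loss by
`2ε (S k - Y k) + ε² X k`, where `S` is the cumulative sum diagram of `û` itself. Admissible
perturbations give `S ≤ Y`, `S n = Y n`, and `S k = Y k` wherever `û` jumps after `k`. Since `û` is
nondecreasing, the upper envelope of the lines through `(X m, S m)` of slope `û m` is a convex
minorant of the diagram. Between the touching points `a < i ≤ b` nearest to `i`, `û` is constant
on `(a, b]`, so the chord from `(X a, Y a)` to `(X b, Y b)` is one of these lines: it lies below the
greatest convex minorant, and by convexity every convex minorant lies below it on `[X a, X b]`.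
Hence the greatest convex minorant is affine with slope `û i` just to the left of `X i`.
-/

open Finset

namespace IsotonicRegression

def partialSum (f : ℕ → ℝ) (k : ℕ) : ℝ := ∑ j ∈ Icc 1 k, f j

@[simp] lemma partialSum_zero (f : ℕ → ℝ) : partialSum f 0 = 0 := by simp [partialSum]

lemma partialSum_sub_partialSum (f : ℕ → ℝ) {p q : ℕ} (hpq : p ≤ q) :
    partialSum f q - partialSum f p = ∑ j ∈ Ioc p q, f j := by
  have hIcc (k : ℕ) : Icc 1 k = Ioc 0 k := by ext; simp; omega
  rw [partialSum, partialSum, hIcc, hIcc, ← sum_Ioc_consecutive f p.zero_le hpq,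
    add_sub_cancel_left]

lemma partialSum_nonneg {n k : ℕ} {d : ℕ → ℝ} (hd : ∀ j ∈ Icc 1 n, 0 ≤ d j) (hk : k ≤ n) :
    0 ≤ partialSum d k :=
  sum_nonneg fun j hj => hd j (Icc_subset_Icc_right hk hj)

lemma strictMonoOn_partialSum {n : ℕ} {d : ℕ → ℝ} (hd : ∀ j ∈ Icc 1 n, 0 < d j) :
    StrictMonoOn (partialSum d) (Set.Iic n) := by
  intro p _ q hq hpq
  rw [← sub_pos, partialSum_sub_partialSum d hpq.le]
  refine sum_pos (fun j hj => hd j ?_) (nonempty_Ioc.mpr hpq)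
  simp only [Set.mem_Iic] at hq
  simp only [mem_Ioc, mem_Icc] at hj ⊢
  omega

lemma partialSum_mul_sub_eq {u d : ℕ → ℝ} {a b : ℕ} {c : ℝ} (hab : a ≤ b)
    (hu : ∀ j ∈ Ioc a b, u j = c) :
    partialSum (fun j => u j * d j) b - partialSum (fun j => u j * d j) a =
      c * (partialSum d b - partialSum d a) := by
  rw [partialSum_sub_partialSum _ hab, partialSum_sub_partialSum _ hab, mul_sum]
  exact sum_congr rfl fun j hj => by rw [hu j hj]

lemma partialSum_add_mul_sub_le {n m k : ℕ} {u d : ℕ → ℝ} (hu : MonotoneOn u (Icc 1 n))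
    (hd : ∀ j ∈ Icc 1 n, 0 ≤ d j) (hm : m ∈ Icc 1 n) (hk : k ≤ n) :
    partialSum (fun j => u j * d j) m + u m * (partialSum d k - partialSum d m) ≤
      partialSum (fun j => u j * d j) k := by
  have hIoc {p q : ℕ} (hq : q ≤ n) {j : ℕ} (hj : j ∈ Ioc p q) : j ∈ Icc 1 n := by
    simp only [mem_Ioc, mem_Icc] at hj ⊢; omega
  rcases le_total m k with hmk | hkm
  · have hslope : ∑ j ∈ Ioc m k, u m * d j ≤ ∑ j ∈ Ioc m k, u j * d j :=
      sum_le_sum fun j hj => mul_le_mul_of_nonneg_right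
        (hu hm (hIoc hk hj) (mem_Ioc.mp hj).1.le) (hd j (hIoc hk hj))
    rw [← mul_sum, ← partialSum_sub_partialSum _ hmk, ← partialSum_sub_partialSum _ hmk] at hslope
    linarith
  · have hslope : ∑ j ∈ Ioc k m, u j * d j ≤ ∑ j ∈ Ioc k m, u m * d j :=
      sum_le_sum fun j hj => mul_le_mul_of_nonneg_right
        (hu (hIoc (mem_Icc.mp hm).2 hj) hm (mem_Ioc.mp hj).2) (hd j (hIoc (mem_Icc.mp hm).2 hj))
    rw [← mul_sum, ← partialSum_sub_partialSum _ hkm, ← partialSum_sub_partialSum _ hkm] at hslope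
    linarith

lemma sum_add_ite_sub_sq_mul_eq {n k : ℕ} (hk : k ≤ n) (u g d : ℕ → ℝ) (ε : ℝ) :
    ∑ j ∈ Icc 1 n, ((u j + if j ≤ k then ε else 0) - g j) ^ 2 * d j =
      ∑ j ∈ Icc 1 n, (u j - g j) ^ 2 * d j +
        2 * ε * (partialSum (fun j => u j * d j) k - partialSum (fun j => g j * d j) k) +
        ε ^ 2 * partialSum d k := by
  have hterm (j : ℕ) : ((u j + if j ≤ k then ε else 0) - g j) ^ 2 * d j =
      (u j - g j) ^ 2 * d j +
        if j ≤ k then 2 * ε * (u j * d j - g j * d j) + ε ^ 2 * d j else 0 := by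
    split_ifs <;> ring
  have hfilter : (Icc 1 n).filter (· ≤ k) = Icc 1 k := by ext; simp; omega
  rw [sum_congr rfl fun j _ => hterm j, sum_add_distrib, ← sum_filter, hfilter, sum_add_distrib,
    ← mul_sum, ← mul_sum, sum_sub_distrib, partialSum, partialSum, partialSum, add_assoc]

lemma monotoneOn_add_ite_le {α : Type*} [LinearOrder α] {s : Set α} {u : α → ℝ} {k : α} {ε : ℝ}
    (hu : MonotoneOn u s) (hε : ∀ i ∈ s, ∀ j ∈ s, i ≤ k → k < j → u i + ε ≤ u j) :
    MonotoneOn (fun j => u j + if j ≤ k then ε else 0) s := by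
  intro i hi j hj hij
  dsimp only
  split_ifs with hik hjk hjk
  · linarith [hu hi hj hij]
  · simpa using hε i hi j hj hik (not_le.mp hjk)
  · exact absurd (hij.trans hjk) hik
  · simpa using hu hi hj hij

lemma nonneg_of_two_mul_add_sq_nonneg {c x δ : ℝ} (hx : 0 ≤ x) (hδ : 0 < δ)
    (h : ∀ ε, 0 < ε → ε ≤ δ → 0 ≤ 2 * ε * c + ε ^ 2 * x) : 0 ≤ c := by
  by_contra! hc
  set ε := min δ (-c / (x + 1))
  have hε : 0 < ε := lt_min hδ (div_pos (by linarith) (by linarith))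
  have hεx : ε * (x + 1) ≤ -c := (le_div_iff₀ (by linarith)).mp (min_le_right _ _)
  nlinarith [h ε hε (min_le_left _ _), mul_le_mul_of_nonneg_left hεx hε.le,
    mul_neg_of_pos_of_neg hε hc]

def IsIsotonicRegression (n : ℕ) (d g u : ℕ → ℝ) : Prop :=
  MonotoneOn u (Icc 1 n) ∧
    IsMinOn (fun v : ℕ → ℝ => ∑ j ∈ Icc 1 n, (v j - g j) ^ 2 * d j) {v | MonotoneOn v (Icc 1 n)} u

namespace IsIsotonicRegression

variable {n : ℕ} {d g u : ℕ → ℝ}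

lemma two_mul_add_sq_nonneg (hu : IsIsotonicRegression n d g u) {k : ℕ} (hk : k ≤ n) {ε : ℝ}
    (hε : MonotoneOn (fun j => u j + if j ≤ k then ε else 0) (Icc 1 n)) :
    0 ≤ 2 * ε * (partialSum (fun j => u j * d j) k - partialSum (fun j => g j * d j) k) +
      ε ^ 2 * partialSum d k := by
  have h := isMinOn_iff.mp hu.2 _ hε
  rw [sum_add_ite_sub_sq_mul_eq hk] at h
  linarith

lemma partialSum_mul_le (hu : IsIsotonicRegression n d g u) (hd : ∀ j ∈ Icc 1 n, 0 ≤ d j)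
    {k : ℕ} (hk : k ≤ n) :
    partialSum (fun j => u j * d j) k ≤ partialSum (fun j => g j * d j) k := by
  refine sub_nonneg.mp <| nonneg_of_two_mul_add_sq_nonneg (partialSum_nonneg hd hk) one_pos
    fun ε _ _ => ?_
  have h := hu.two_mul_add_sq_nonneg hk (ε := -ε) <|
    monotoneOn_add_ite_le hu.1 fun i hi j hj hik hkj => by
      linarith [hu.1 hi hj (hik.trans hkj.le)]
  linarith

lemma partialSum_mul_eq_last (hu : IsIsotonicRegression n d g u) (hd : ∀ j ∈ Icc 1 n, 0 ≤ d j) :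
    partialSum (fun j => u j * d j) n = partialSum (fun j => g j * d j) n := by
  refine le_antisymm (hu.partialSum_mul_le hd le_rfl) (sub_nonneg.mp ?_)
  refine nonneg_of_two_mul_add_sq_nonneg (partialSum_nonneg hd le_rfl) one_pos fun ε _ _ => ?_
  exact hu.two_mul_add_sq_nonneg le_rfl <| monotoneOn_add_ite_le hu.1 fun _ _ j hj _ hnj =>
    absurd (mem_Icc.mp hj).2 (not_le.mpr hnj)

lemma partialSum_mul_eq_of_lt_succ (hu : IsIsotonicRegression n d g u)
    (hd : ∀ j ∈ Icc 1 n, 0 ≤ d j) {k : ℕ} (hk : k ∈ Icc 1 n) (hkn : k < n)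
    (hjump : u k < u (k + 1)) :
    partialSum (fun j => u j * d j) k = partialSum (fun j => g j * d j) k := by
  refine le_antisymm (hu.partialSum_mul_le hd hkn.le) (sub_nonneg.mp ?_)
  refine nonneg_of_two_mul_add_sq_nonneg (partialSum_nonneg hd hkn.le) (sub_pos.mpr hjump)
    fun ε _ hε => ?_
  have hk1 : k + 1 ∈ Icc 1 n := by simp only [mem_Icc] at hk ⊢; omega
  exact hu.two_mul_add_sq_nonneg hkn.le <| monotoneOn_add_ite_le hu.1 fun i hi j hj hik hkj => by
    linarith [hu.1 hi hk hik, hu.1 hk1 hj hkj]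

end IsIsotonicRegression

lemma exists_constant_block {β : Type*} [LinearOrder β] {n i : ℕ} {P : ℕ → Prop} {u : ℕ → β}
    (hu : MonotoneOn u (Icc 1 n)) (h0 : P 0) (hn : P n) (hi : i ∈ Icc 1 n)
    (hjump : ∀ k ∈ Icc 1 n, k < n → u k < u (k + 1) → P k) :
    ∃ a b, a < i ∧ i ≤ b ∧ b ≤ n ∧ P a ∧ P b ∧ ∀ j ∈ Ioc a b, u j = u b := by
  classical
  obtain ⟨hi1, hin⟩ := mem_Icc.mp hi
  have hstep (k : ℕ) (hk : k ∈ Icc 1 n) (hkn : k < n) (hPk : ¬P k) : u k = u (k + 1) :=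
    (hu hk (mem_Icc.mpr ⟨k.succ_pos, hkn⟩) k.le_succ).antisymm
      (not_lt.mp (mt (hjump k hk hkn) hPk))
  have hb : ∃ b, i ≤ b ∧ b ≤ n ∧ P b := ⟨n, hin, le_rfl, hn⟩
  obtain ⟨hib, hbn, hPb⟩ := Nat.find_spec hb
  have hai : Nat.findGreatest P (i - 1) < i := by
    have := Nat.findGreatest_le (P := P) (i - 1); omega
  have hgap : ∀ k, Nat.findGreatest P (i - 1) < k → k < Nat.find hb → ¬P k := by
    intro k hak hkb hPk
    by_cases hki : k ≤ i - 1
    · exact Nat.findGreatest_is_greatest hak hki hPk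
    · exact Nat.find_min hb hkb ⟨by omega, by omega, hPk⟩
  refine ⟨_, _, hai, hib, hbn, Nat.findGreatest_spec (Nat.zero_le _) h0, hPb, fun j hj => ?_⟩
  obtain ⟨haj, hjb⟩ := mem_Ioc.mp hj
  exact Nat.decreasingInduction' (P := fun k => u k = u (Nat.find hb))
    (fun k hkb hjk ih =>
      (hstep k (mem_Icc.mpr ⟨by omega, by omega⟩) (by omega) (hgap k (by omega) hkb)).trans ih)
    hjb rfl

lemma convexOn_affine (α β : ℝ) : ConvexOn ℝ Set.univ fun x => α + β * x :=
  ⟨convex_univ, fun x _ y _ a b _ _ hab => le_of_eq <| by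
    simp only [smul_eq_mul]; linear_combination (-α) * hab⟩

lemma _root_.ConvexOn.le_affine_of_mem_Icc {φ : ℝ → ℝ} (hφ : ConvexOn ℝ Set.univ φ)
    {α β p q x : ℝ} (hx : x ∈ Set.Icc p q) (hp : φ p ≤ α + β * p) (hq : φ q ≤ α + β * q) :
    φ x ≤ α + β * x := by
  have hgap := (hφ.add (convexOn_affine (-α) (-β))).le_on_segment (Set.mem_univ p)
    (Set.mem_univ q) (by rwa [segment_eq_Icc (hx.1.trans hx.2)])
  simp only [Pi.add_apply, le_max_iff] at hgap
  rcases hgap with h | h <;> linarith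

def tangentEnvelope {n : ℕ} (hn : (Icc 1 n).Nonempty) (u d : ℕ → ℝ) : ℝ → ℝ :=
  (Icc 1 n).sup' hn fun m x =>
    (partialSum (fun j => u j * d j) m - u m * partialSum d m) + u m * x

lemma convexOn_tangentEnvelope {n : ℕ} (hn : (Icc 1 n).Nonempty) (u d : ℕ → ℝ) :
    ConvexOn ℝ Set.univ (tangentEnvelope hn u d) :=
  sup'_induction hn _ (fun _ hf _ hg => hf.sup hg) fun _ _ => convexOn_affine _ _

lemma le_tangentEnvelope {n m : ℕ} (hn : (Icc 1 n).Nonempty) (u d : ℕ → ℝ) (hm : m ∈ Icc 1 n)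
    (x : ℝ) :
    (partialSum (fun j => u j * d j) m - u m * partialSum d m) + u m * x ≤
      tangentEnvelope hn u d x := by
  rw [tangentEnvelope, Finset.sup'_apply]
  exact le_sup' (fun m => (partialSum (fun j => u j * d j) m - u m * partialSum d m) + u m * x) hm

lemma tangentEnvelope_le {n k : ℕ} (hn : (Icc 1 n).Nonempty) {u d : ℕ → ℝ}
    (hu : MonotoneOn u (Icc 1 n)) (hd : ∀ j ∈ Icc 1 n, 0 ≤ d j) (hk : k ≤ n) :
    tangentEnvelope hn u d (partialSum d k) ≤ partialSum (fun j => u j * d j) k := by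
  rw [tangentEnvelope, Finset.sup'_apply]
  refine sup'_le _ _ fun m hm => ?_
  linarith [partialSum_add_mul_sub_le hu hd hm hk]

lemma isGreatest_convexMinorant_affine {n a b : ℕ} {X Y : ℕ → ℝ} {ψ : ℝ → ℝ} {α β x : ℝ}
    (ha : a ≤ n) (hb : b ≤ n) (hYa : Y a ≤ α + β * X a) (hYb : Y b ≤ α + β * X b)
    (hx : x ∈ Set.Icc (X a) (X b)) (hψ : ConvexOn ℝ Set.univ ψ) (hψY : ∀ i ≤ n, ψ (X i) ≤ Y i)
    (hψx : α + β * x ≤ ψ x) :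
    IsGreatest {y | ∃ φ : ℝ → ℝ, ConvexOn ℝ Set.univ φ ∧ (∀ i ≤ n, φ (X i) ≤ Y i) ∧ y = φ x}
      (α + β * x) := by
  have hle (φ : ℝ → ℝ) (hφ : ConvexOn ℝ Set.univ φ) (hφY : ∀ i ≤ n, φ (X i) ≤ Y i) :
      φ x ≤ α + β * x :=
    hφ.le_affine_of_mem_Icc hx ((hφY a ha).trans hYa) ((hφY b hb).trans hYb)
  refine ⟨⟨ψ, hψ, hψY, le_antisymm hψx (hle ψ hψ hψY)⟩, ?_⟩
  rintro y ⟨φ, hφ, hφY, rfl⟩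
  exact hle φ hφ hφY

lemma hasDerivWithinAt_Iio_of_eqOn_Icc {f : ℝ → ℝ} {α β p q x : ℝ}
    (hf : Set.EqOn f (fun y => α + β * y) (Set.Icc p q)) (hx : x ∈ Set.Ioc p q) :
    HasDerivWithinAt f β (Set.Iio x) x := by
  have hline : HasDerivWithinAt (fun y => α + β * y) β (Set.Iio x) x := by
    simpa using (((hasDerivAt_id x).const_mul β).const_add α).hasDerivWithinAt
  refine hline.congr_of_eventuallyEq ?_ (hf ⟨hx.1.le, hx.2⟩)
  filter_upwards [Ioo_mem_nhdsLT hx.1] with y hy using hf ⟨hy.1.le, hy.2.le.trans hx.2⟩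

end IsotonicRegression

open IsotonicRegression in
/-- Robertson–Wright–Dykstra: the weighted isotonic regression of g with weights d
is given by the left-hand slopes, at the abscissae Σ_{j≤i} dⱼ, of the greatest convex
minorant of the cumulative sum diagram {(Σ_{j≤i} dⱼ, Σ_{j≤i} g(j)dⱼ) : i = 0,…,n}. -/
theorem isotonic_regression_is_slogcm (n : ℕ) (d g : ℕ → ℝ)
    (hd : ∀ i ∈ Finset.Icc 1 n, 0 < d i)
    (uhat : ℕ → ℝ)
    (hmono : ∀ i j, i ∈ Finset.Icc 1 n → j ∈ Finset.Icc 1 n → i ≤ j → uhat i ≤ uhat j)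
    (hmin : IsMinOn (fun u : ℕ → ℝ => ∑ i ∈ Finset.Icc 1 n, (u i - g i) ^ 2 * d i)
        {u : ℕ → ℝ | ∀ i j, i ∈ Finset.Icc 1 n → j ∈ Finset.Icc 1 n → i ≤ j → u i ≤ u j}
        uhat)
    (X Y : ℕ → ℝ)
    (hX : ∀ i, X i = ∑ j ∈ Finset.Icc 1 i, d j)
    (hY : ∀ i, Y i = ∑ j ∈ Finset.Icc 1 i, g j * d j)
    (C : ℝ → ℝ)
    (hC : ∀ x : ℝ, C x = sSup {y : ℝ | ∃ φ : ℝ → ℝ, ConvexOn ℝ Set.univ φ ∧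
        (∀ i ≤ n, φ (X i) ≤ Y i) ∧ y = φ x}) :
    ∀ i ∈ Finset.Icc 1 n, HasDerivWithinAt C (uhat i) (Set.Iio (X i)) (X i) := by
  intro i hi
  obtain ⟨hi1, hin⟩ := mem_Icc.mp hi
  obtain rfl : X = partialSum d := funext hX
  obtain rfl : Y = partialSum (fun j => g j * d j) := funext hY
  have hd₀ : ∀ j ∈ Finset.Icc 1 n, 0 ≤ d j := fun j hj => (hd j hj).le
  have hu : IsIsotonicRegression n d g uhat :=
    ⟨fun p hp q hq hpq => hmono p q hp hq hpq,
      hmin.on_subset fun v (hv : MonotoneOn v _) p q hp hq hpq => hv hp hq hpq⟩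
  set S := partialSum (fun j => uhat j * d j)
  obtain ⟨a, b, hai, hib, hbn, hSa, hSb, hblock⟩ :=
    exists_constant_block (P := fun k => S k = partialSum (fun j => g j * d j) k) hu.1
      (by simp [S]) (hu.partialSum_mul_eq_last hd₀) hi
      fun k hk hkn => hu.partialSum_mul_eq_of_lt_succ hd₀ hk hkn
  have hn : (Finset.Icc 1 n).Nonempty := ⟨i, hi⟩
  have hCaffine : Set.EqOn C (fun x => (S b - uhat b * partialSum d b) + uhat b * x)
      (Set.Icc (partialSum d a) (partialSum d b)) := by
    intro x hx
    rw [hC x]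
    refine (isGreatest_convexMinorant_affine (by omega) hbn ?_ (by linarith) hx
      (convexOn_tangentEnvelope hn uhat d) (fun k hk => ?_)
      (le_tangentEnvelope hn uhat d (mem_Icc.mpr ⟨hi1.trans hib, hbn⟩) x)).csSup_eq
    · linarith [partialSum_mul_sub_eq (d := d) (hai.trans_le hib).le hblock]
    · exact (tangentEnvelope_le hn hu.1 hd₀ hk).trans (hu.partialSum_mul_le hd₀ hk)
  rw [hblock i (mem_Ioc.mpr ⟨hai, hib⟩)]
  refine hasDerivWithinAt_Iio_of_eqOn_Icc hCaffine ⟨?_, ?_⟩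
  · exact strictMonoOn_partialSum hd (Set.mem_Iic.mpr (by omega)) (Set.mem_Iic.mpr hin) hai
  · exact (strictMonoOn_partialSum hd).monotoneOn (Set.mem_Iic.mpr hin) hbn hib
end
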